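/- arXiv:2303.11768 — 2 statements merged into one kernel-verified Lean document; each statement's English description precedes it below -/
import Mathlib

section
/- Let X be an infinite Hausdorff space. The following are equivalent: (i) 𝒫_fin(X) has the Hurewicz property; (ii) 𝒫_fin(X) satisfies S_fin(Ω_{𝒫_fin(X)}, Ω_{𝒫_fin(X)}^gp); (iii) X satisfies S_fin(Ω_X, Ω_X^gp); (iv) every finite power Xⁿ (n ≥ 1, with the product topology) has the Hurewicz property; (v) One does not have a winning strategy in the game G_fin(Ω_X, Ω_X^gp). -/
open Set TopologicalSpace

universe u

/-- A non-trivial open cover: a family of nonempty proper open sets covering `X`. -/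
def NTOpenCover (X : Type u) [TopologicalSpace X] (𝒰 : Set (Set X)) : Prop :=
  (∀ U ∈ 𝒰, IsOpen U ∧ U.Nonempty ∧ U ≠ Set.univ) ∧ ⋃₀ 𝒰 = Set.univ

/-- `𝒪_X`, the collection of non-trivial open covers of `X`. -/
def OX (X : Type u) [TopologicalSpace X] : Set (Set (Set X)) := {𝒰 | NTOpenCover X 𝒰}

/-- The Hurewicz property. -/
def HurewiczProp (X : Type u) [TopologicalSpace X] : Prop :=
  ∀ 𝒰 : ℕ → Set (Set X), (∀ n, 𝒰 n ∈ OX X) →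
    ∃ ℱ : ℕ → Set (Set X), (∀ n, ℱ n ⊆ 𝒰 n ∧ (ℱ n).Finite) ∧
      ∀ x : X, ∃ m : ℕ, ∀ n ≥ m, x ∈ ⋃₀ ℱ n

/-- The selection principle `S_fin(𝒜, ℬ)`. -/
def Sfin {α : Type u} (𝒜 ℬ : Set (Set α)) : Prop :=
  ∀ 𝒰 : ℕ → Set α, (∀ n, 𝒰 n ∈ 𝒜) →
    ∃ ℱ : ℕ → Set α, (∀ n, ℱ n ⊆ 𝒰 n ∧ (ℱ n).Finite) ∧ (⋃ n, ℱ n) ∈ ℬ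

/-- The selection principle `S_1(𝒜, ℬ)`. -/
def Sone {α : Type u} (𝒜 ℬ : Set (Set α)) : Prop :=
  ∀ 𝒰 : ℕ → Set α, (∀ n, 𝒰 n ∈ 𝒜) →
    ∃ f : ℕ → α, (∀ n, f n ∈ 𝒰 n) ∧ Set.range f ∈ ℬ

/-- A member `C` of a collection `ℭ` is groupable if there is a finite-to-one map
`φ : C → ℕ` such that for every infinite `J ⊆ ℕ`, `⋃ {φ⁻¹(n) : n ∈ J} ∈ ℭ`. -/
def Groupable {α : Type u} (ℭ : Set (Set α)) (C : Set α) : Prop :=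
  ∃ φ : α → ℕ, (∀ n : ℕ, {x ∈ C | φ x = n}.Finite) ∧
    ∀ J : Set ℕ, J.Infinite → {x ∈ C | φ x ∈ J} ∈ ℭ

/-- `ℭ^gp`, the collection of groupable members of `ℭ`. -/
def groupables {α : Type u} (ℭ : Set (Set α)) : Set (Set α) :=
  {C | C ∈ ℭ ∧ Groupable ℭ C}

/-- The Menger property. -/
def MengerProp (X : Type u) [TopologicalSpace X] : Prop := Sfin (OX X) (OX X)

/-- The Rothberger property. -/
def RothbergerProp (X : Type u) [TopologicalSpace X] : Prop := Sone (OX X) (OX X)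

/-- The Gerlits-Nagy property: Hurewicz and Rothberger. -/
def GerlitsNagyProp (X : Type u) [TopologicalSpace X] : Prop :=
  HurewiczProp X ∧ RothbergerProp X

/-- `𝒪_X(𝒜)`, the collection of `𝒜`-covers of `X`. -/
def ACovers (X : Type u) [TopologicalSpace X] (𝒜 : Set (Set X)) : Set (Set (Set X)) :=
  {𝒰 | 𝒰 ∈ OX X ∧ ∀ A ∈ 𝒜, ∃ U ∈ 𝒰, A ⊆ U}

/-- `𝒦_X`, the collection of `k`-covers of `X`. -/
def KCovers (X : Type u) [TopologicalSpace X] : Set (Set (Set X)) :=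
  {𝒰 | 𝒰 ∈ OX X ∧ ∀ K : Set X, IsCompact K → K.Nonempty → ∃ U ∈ 𝒰, K ⊆ U}

/-- `Ω_X`, the collection of `ω`-covers of `X`. -/
def OmegaCovers (X : Type u) [TopologicalSpace X] : Set (Set (Set X)) :=
  {𝒰 | 𝒰 ∈ OX X ∧ ∀ F : Set X, F.Finite → F.Nonempty → ∃ U ∈ 𝒰, F ⊆ U}

/-- An ideal of closed sets of `X`. -/
def IdealOfClosedSets (X : Type u) [TopologicalSpace X] (𝒜 : Set (Set X)) : Prop :=
  (∀ A ∈ 𝒜, IsClosed A ∧ A.Nonempty ∧ A ≠ Set.univ) ∧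
  (∀ F : Set X, F.Finite → F.Nonempty → F ∈ 𝒜) ∧
  (∀ A B : Set X, A ∈ 𝒜 → B ∈ 𝒜 → A ∪ B ≠ Set.univ → A ∪ B ∈ 𝒜) ∧
  (∀ A ∈ 𝒜, ∀ B : Set X, B ⊆ A → IsClosed B → B.Nonempty → B ∈ 𝒜)

/-- One has a winning strategy in the Hurewicz game on `X`. -/
def OneWinsHurewicz (X : Type u) [TopologicalSpace X] : Prop :=
  ∃ σ : List (Set (Set X)) → Set (Set X), (∀ s, σ s ∈ OX X) ∧
    ∀ F : ℕ → Set (Set X),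
      (∀ n, (F n).Finite ∧ F n ⊆ σ (List.ofFn fun i : Fin n => F i)) →
        ∃ x : X, ∀ m : ℕ, ∃ n ≥ m, x ∉ ⋃₀ F n

/-- One has a winning strategy in `G_fin(𝒜, ℬ)`. -/
def OneWinsGfin {α : Type u} (𝒜 ℬ : Set (Set α)) : Prop :=
  ∃ σ : List (Set α) → Set α, (∀ s, σ s ∈ 𝒜) ∧
    ∀ F : ℕ → Set α,
      (∀ n, (F n).Finite ∧ F n ⊆ σ (List.ofFn fun i : Fin n => F i)) →
        (⋃ n, F n) ∉ ℬ

/-- One has a winning predetermined strategy in `G_fin(𝒜, ℬ)`. -/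
def OneWinsPreGfin {α : Type u} (𝒜 ℬ : Set (Set α)) : Prop :=
  ∃ σ : ℕ → Set α, (∀ n, σ n ∈ 𝒜) ∧
    ∀ F : ℕ → Set α, (∀ n, (F n).Finite ∧ F n ⊆ σ n) → (⋃ n, F n) ∉ ℬ

/-- One has a winning strategy in `G_1(𝒜, ℬ)`. -/
def OneWinsGone {α : Type u} (𝒜 ℬ : Set (Set α)) : Prop :=
  ∃ σ : List α → Set α, (∀ s, σ s ∈ 𝒜) ∧
    ∀ f : ℕ → α, (∀ n, f n ∈ σ (List.ofFn fun i : Fin n => f i)) → Set.range f ∉ ℬ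

/-- One has a winning predetermined strategy in `G_1(𝒜, ℬ)`. -/
def OneWinsPreGone {α : Type u} (𝒜 ℬ : Set (Set α)) : Prop :=
  ∃ σ : ℕ → Set α, (∀ n, σ n ∈ 𝒜) ∧
    ∀ f : ℕ → α, (∀ n, f n ∈ σ n) → Set.range f ∉ ℬ

/-- The collection `𝒜` of subsets of `X`, viewed as a hyperspace with the Vietoris topology. -/
def Hyper (X : Type u) (𝒜 : Set (Set X)) : Type u := {K : Set X // K ∈ 𝒜}

/-- The Vietoris topology on `Hyper X 𝒜`. -/
instance Hyper.topologicalSpace (X : Type u) [TopologicalSpace X] (𝒜 : Set (Set X)) :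
    TopologicalSpace (Hyper X 𝒜) :=
  TopologicalSpace.generateFrom
    {S | ∃ U : Set X, IsOpen U ∧
      (S = {K : Hyper X 𝒜 | K.1 ⊆ U} ∨ S = {K : Hyper X 𝒜 | (K.1 ∩ U).Nonempty})}

/-- `𝕂(X)`: the nonempty compact subsets of `X` with the Vietoris topology. -/
abbrev HyperK (X : Type u) [TopologicalSpace X] : Type u :=
  Hyper X {K : Set X | IsCompact K ∧ K.Nonempty}

/-- `𝒫_fin(X)`: the nonempty finite subsets of `X` with the Vietoris topology. -/
abbrev PFin (X : Type u) : Type u :=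
  Hyper X {F : Set X | F.Finite ∧ F.Nonempty}

/-- `C_p(X)`: continuous real-valued functions with the topology of pointwise convergence
(the subspace topology from the product topology on `X → ℝ`). -/
abbrev Cp (X : Type u) [TopologicalSpace X] : Type u := {f : X → ℝ // Continuous f}

/-- `C_k(X)`: continuous real-valued functions with the compact-open topology. -/
def Ck (X : Type u) [TopologicalSpace X] : Type u := {f : X → ℝ // Continuous f}

instance Ck.topologicalSpace (X : Type u) [TopologicalSpace X] : TopologicalSpace (Ck X) :=
  TopologicalSpace.generateFrom
    {S | ∃ (K : Set X) (U : Set ℝ), IsCompact K ∧ IsOpen U ∧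
      S = {f : Ck X | ∀ x ∈ K, f.1 x ∈ U}}

/-- The constantly zero function in `C_p(X)`. -/
def zeroCp (X : Type u) [TopologicalSpace X] : Cp X := ⟨fun _ => (0 : ℝ), continuous_const⟩

/-- The constantly zero function in `C_k(X)`. -/
def zeroCk (X : Type u) [TopologicalSpace X] : Ck X := ⟨fun _ => (0 : ℝ), continuous_const⟩

/-- `Ω_{Y,y}`: the sets having `y` in their closure but not containing `y`. -/
def OmegaPt (Y : Type u) [TopologicalSpace Y] (y : Y) : Set (Set Y) :=
  {A | y ∈ closure A ∧ y ∉ A}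

/-- Countable fan-tightness. -/
def CountableFanTightness (Y : Type u) [TopologicalSpace Y] : Prop :=
  ∀ y : Y, Sfin (OmegaPt Y y) (OmegaPt Y y)

/-- Countable strong fan-tightness. -/
def CountableStrongFanTightness (Y : Type u) [TopologicalSpace Y] : Prop :=
  ∀ y : Y, Sone (OmegaPt Y y) (OmegaPt Y y)

/-- The Reznichenko property: every countable member of `Ω_{Y,y}` is groupable. -/
def Reznichenko (Y : Type u) [TopologicalSpace Y] : Prop :=
  ∀ y : Y, ∀ A ∈ OmegaPt Y y, A.Countable → Groupable (OmegaPt Y y) A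


/-!
The hub is `OmegaHurewicz X`: `𝒫_fin(X)` is Hurewicz for covers by the boxes `{K | K ⊆ U}` with
`U` running through ω-covers of `X`. Both (i) and (iii) give it; for (iii), the groups of a
groupable selection from the running intersections of the given ω-covers are the required finite
families. It gives (iv): by the tube lemma, an open cover of `Xᵏ` induces the ω-cover of `X` by the
open sets `W` with `Wᵏ` covered by finitely many of its members. Conversely, `𝒫_fin(X)` and its
finite powers are countable unions of continuous images of finite powers of `X`, so (iv) gives (i)
and makes all finite powers of `𝒫_fin(X)` Hurewicz.

If all finite powers of a space are Hurewicz, Two defeats every strategy of One in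
`G_fin(Ω, Ω^gp)`: One's covers may be replaced by countable ω-subcovers, so only countably many
positions are reachable, and one application of the Hurewicz property of each power `Xᵏ`, to the
covers by the cubes `(U₁ ∩ ⋯ ∩ Uᵣ)ᵏ` indexed by these positions, lets Two capture every finite set
by a member that has not been played before. This gives (iv) ⇒ (v), and, for `𝒫_fin(X)`,
(iv) ⇒ (ii). The implications (v) ⇒ (iii) and (ii) ⇒ (iii) are direct.
-/
open Filter Function

section OmegaCovers

variable {X : Type u} [TopologicalSpace X] {𝒰 : Set (Set X)} {F : Set X}

lemma mem_omegaCovers_of (hmem : ∀ U ∈ 𝒰, IsOpen U ∧ U.Nonempty ∧ U ≠ univ)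
    (hω : ∀ F : Set X, F.Finite → F.Nonempty → ∃ U ∈ 𝒰, F ⊆ U) : 𝒰 ∈ OmegaCovers X := by
  refine ⟨⟨hmem, eq_univ_of_forall fun x => ?_⟩, hω⟩
  obtain ⟨U, hU, hxU⟩ := hω {x} (finite_singleton x) (singleton_nonempty x)
  exact ⟨U, hU, hxU rfl⟩

lemma exists_superset_of_mem_omegaCovers [Nonempty X] (h𝒰 : 𝒰 ∈ OmegaCovers X)
    (hF : F.Finite) : ∃ U ∈ 𝒰, F ⊆ U := by
  obtain ⟨U, hU, hsub⟩ := h𝒰.2 (insert (Classical.arbitrary X) F) (hF.insert _)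
    (insert_nonempty _ _)
  exact ⟨U, hU, (subset_insert _ _).trans hsub⟩

lemma infinite_setOf_superset_of_mem_omegaCovers [Nonempty X] (h𝒰 : 𝒰 ∈ OmegaCovers X)
    (hF : F.Finite) : {U ∈ 𝒰 | F ⊆ U}.Infinite := by
  intro hfin
  -- otherwise add to `F` a point outside each of the finitely many members containing `F`
  have hout : ∀ U ∈ {U ∈ 𝒰 | F ⊆ U}, ∃ x, x ∉ U := fun U hU =>
    (ne_univ_iff_exists_notMem U).1 (h𝒰.1.1 U hU.1).2.2
  choose! g hg using hout
  obtain ⟨U, hU, hsub⟩ := exists_superset_of_mem_omegaCovers h𝒰 (hF.union (hfin.image g))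
  have hUmem : U ∈ {U ∈ 𝒰 | F ⊆ U} := ⟨hU, subset_union_left.trans hsub⟩
  exact hg U hUmem (hsub (Or.inr (mem_image_of_mem g hUmem)))

lemma exists_ncard_lt_subset_sInter_of_mem_omegaCovers [Nonempty X]
    (h𝒰 : 𝒰 ∈ OmegaCovers X) (hF : F.Finite) (r : ℕ) :
    ∃ 𝒯 ⊆ 𝒰, r < 𝒯.ncard ∧ F ⊆ ⋂₀ 𝒯 := by
  obtain ⟨𝒯, h𝒯, -, hcard⟩ :=
    (infinite_setOf_superset_of_mem_omegaCovers h𝒰 hF).exists_subset_ncard_eq (r + 1)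
  exact ⟨𝒯, fun U hU => (h𝒯 hU).1, by omega, subset_sInter fun U hU => (h𝒯 hU).2⟩

end OmegaCovers

section Groupable

lemma Groupable.of_image {α β : Type u} {f : α → β} (hf : Injective f) {ℭ : Set (Set α)}
    {ℭ' : Set (Set β)} {C : Set α} (hmem : ∀ D ⊆ C, f '' D ∈ ℭ' → D ∈ ℭ)
    (h : Groupable ℭ' (f '' C)) : Groupable ℭ C := by
  obtain ⟨φ, hfib, hJ⟩ := h
  have himage : ∀ P : ℕ → Prop, f '' {x ∈ C | P (φ (f x))} = {y ∈ f '' C | P (φ y)} :=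
    fun P => image_inter_preimage f C {y | P (φ y)}
  exact ⟨φ ∘ f, fun n => .of_finite_image (himage (· = n) ▸ hfib n) hf.injOn,
    fun J hJ' => hmem _ (sep_subset _ _) (himage (· ∈ J) ▸ hJ J hJ')⟩

variable {X : Type u} [TopologicalSpace X]

lemma iUnion_mem_groupables_of_fresh (F : ℕ → Set (Set X)) (hfin : ∀ n, (F n).Finite)
    (hmem : ∀ n, ∀ U ∈ F n, IsOpen U ∧ U.Nonempty ∧ U ≠ univ)
    (hfresh : ∀ G : Set X, G.Finite → G.Nonempty →
      ∀ᶠ n in atTop, ∃ U ∈ F n, (∀ i < n, U ∉ F i) ∧ G ⊆ U) :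
    (⋃ n, F n) ∈ groupables (OmegaCovers X) := by
  set φ : Set X → ℕ := fun U => sInf {n | U ∈ F n}
  have hφ_mem : ∀ U ∈ ⋃ n, F n, U ∈ F (φ U) := fun U hU => Nat.sInf_mem (mem_iUnion.1 hU)
  have hφ_fresh : ∀ n, ∀ U ∈ F n, (∀ i < n, U ∉ F i) → φ U = n := fun n U hU hnew =>
    le_antisymm (Nat.sInf_le hU)
      (not_lt.1 fun hlt => hnew _ hlt (Nat.sInf_mem (s := {n | U ∈ F n}) ⟨n, hU⟩))
  have hJ : ∀ J : Set ℕ, J.Infinite → {U ∈ ⋃ n, F n | φ U ∈ J} ∈ OmegaCovers X := by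
    intro J hJ
    refine mem_omegaCovers_of (fun U hU => hmem _ U (hφ_mem U hU.1)) fun G hG hGne => ?_
    obtain ⟨n, ⟨U, hU, hnew, hGU⟩, hnJ⟩ :=
      ((hfresh G hG hGne).and_frequently (Nat.frequently_atTop_iff_infinite.2 hJ)).exists
    exact ⟨U, ⟨mem_iUnion.2 ⟨n, hU⟩, hφ_fresh n U hU hnew ▸ hnJ⟩, hGU⟩
  refine ⟨by simpa only [mem_univ, and_true, ofPred_mem_eq] using hJ univ infinite_univ, φ,
    fun n => (hfin n).subset ?_, hJ⟩
  rintro U ⟨hU, rfl⟩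
  exact hφ_mem U hU

lemma exists_tail_groups_of_iUnion_mem_groupables {𝒜 : ℕ → Set (Set X)} (hfin : ∀ n, (𝒜 n).Finite)
    (hgp : (⋃ n, 𝒜 n) ∈ groupables (OmegaCovers X)) :
    ∃ G : ℕ → Set (Set X), (∀ j, (G j).Finite ∧ ∀ U ∈ G j, ∃ n ≥ j, U ∈ 𝒜 n) ∧
      ∀ F : Set X, F.Finite → F.Nonempty → ∀ᶠ j in atTop, ∃ U ∈ G j, F ⊆ U := by
  obtain ⟨-, φ, hfib, hJ⟩ := hgp
  have hgood : ∀ F : Set X, F.Finite → F.Nonempty →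
      ∀ᶠ k in atTop, ∃ U ∈ ⋃ n, 𝒜 n, φ U = k ∧ F ⊆ U := by
    intro F hF hFne
    rw [← Nat.cofinite_eq_atTop, eventually_cofinite]
    by_contra hinf
    obtain ⟨U, ⟨hU, hUbad⟩, hFU⟩ := (hJ _ hinf).2 F hF hFne
    exact hUbad ⟨U, hU, rfl, hFU⟩
  have hbound : ∀ j, ∃ b, ∀ n < j, ∀ U ∈ 𝒜 n, φ U < b := by
    intro j
    obtain ⟨b, hb⟩ := (((finite_Iio j).biUnion fun n _ => hfin n).image φ).bddAbove
    exact ⟨b + 1, fun n hn U hU => Nat.lt_succ_of_le (hb ⟨U, mem_biUnion hn hU, rfl⟩)⟩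
  choose b hb using hbound
  -- the `j`-th group is the `φ`-group `b j + j`, which avoids `𝒜 0, …, 𝒜 (j - 1)`
  refine ⟨fun j => {U ∈ ⋃ n, 𝒜 n | φ U = b j + j}, fun j => ⟨hfib _, ?_⟩, fun F hF hFne => ?_⟩
  · rintro U ⟨hU, hφU⟩
    obtain ⟨n, hn⟩ := mem_iUnion.1 hU
    refine ⟨n, not_lt.1 fun hnj => ?_, hn⟩
    have := hb j n hnj U hn
    omega
  · have hr : Tendsto (fun j => b j + j) atTop atTop :=
      tendsto_atTop_mono (fun j => Nat.le_add_left j (b j)) tendsto_id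
    filter_upwards [hr.eventually (hgood F hF hFne)] with j ⟨U, hU, hφU, hFU⟩
    exact ⟨U, ⟨hU, hφU⟩, hFU⟩

end Groupable

-- The Hurewicz property for arbitrary open covers; `HurewiczProp` only tests non-trivial ones.
def IsHurewicz (Z : Type*) [TopologicalSpace Z] : Prop :=
  ∀ 𝒰 : ℕ → Set (Set Z), (∀ n, (∀ U ∈ 𝒰 n, IsOpen U) ∧ ⋃₀ 𝒰 n = univ) →
    ∃ ℱ : ℕ → Set (Set Z), (∀ n, ℱ n ⊆ 𝒰 n ∧ (ℱ n).Finite) ∧ ∀ z, ∀ᶠ n in atTop, z ∈ ⋃₀ ℱ n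

lemma exists_finite_subsets_of_sUnion_image {α β : Type*} {A : ℕ → Set α} {U : α → Set β}
    {ℱ : ℕ → Set (Set β)} (hℱ : ∀ n, ℱ n ⊆ U '' A n ∧ (ℱ n).Finite)
    (hcap : ∀ z, ∀ᶠ n in atTop, z ∈ ⋃₀ ℱ n) :
    ∃ I : ℕ → Set α, (∀ n, I n ⊆ A n ∧ (I n).Finite) ∧ ∀ z, ∀ᶠ n in atTop, ∃ a ∈ I n, z ∈ U a := by
  choose I hIA hIfin hIℱ using fun n =>
    exists_subset_image_finite_and.1 ⟨ℱ n, (hℱ n).1, (hℱ n).2, rfl⟩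
  refine ⟨I, fun n => ⟨hIA n, hIfin n⟩, fun z => (hcap z).mono fun n hz => ?_⟩
  rw [hIℱ n, sUnion_image, mem_iUnion₂] at hz
  simpa only [exists_prop] using hz

section Hurewicz

variable {Z : Type*} [TopologicalSpace Z]

lemma IsHurewicz.exists_finite_subsets (h : IsHurewicz Z) {α : Type*} (U : α → Set Z)
    (A : ℕ → Set α) (hU : ∀ n, ∀ a ∈ A n, IsOpen (U a)) (hA : ∀ n z, ∃ a ∈ A n, z ∈ U a) :
    ∃ I : ℕ → Set α, (∀ n, I n ⊆ A n ∧ (I n).Finite) ∧ ∀ z, ∀ᶠ n in atTop, ∃ a ∈ I n, z ∈ U a := by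
  obtain ⟨ℱ, hℱ, hcap⟩ := h (fun n => U '' A n) fun n =>
    ⟨forall_mem_image.2 (hU n), eq_univ_of_forall fun z => by
      obtain ⟨a, ha, hz⟩ := hA n z
      exact ⟨U a, mem_image_of_mem U ha, hz⟩⟩
  exact exists_finite_subsets_of_sUnion_image hℱ hcap

lemma IsHurewicz.hurewiczProp (h : IsHurewicz Z) : HurewiczProp Z := fun 𝒰 h𝒰 =>
  let ⟨ℱ, hℱ, hcap⟩ := h 𝒰 fun n => ⟨fun U hU => ((h𝒰 n).1 U hU).1, (h𝒰 n).2⟩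
  ⟨ℱ, hℱ, fun z => eventually_atTop.1 (hcap z)⟩

-- Removing a point from each member of a cover makes it non-trivial.
lemma HurewiczProp.isHurewicz [T1Space Z] [Nontrivial Z] (h : HurewiczProp Z) :
    IsHurewicz Z := by
  intro 𝒰 h𝒰
  set A : ℕ → Set (Set Z × Z) := fun n => {Va | Va.1 ∈ 𝒰 n ∧ (Va.1 \ {Va.2}).Nonempty}
  set U : Set Z × Z → Set Z := fun Va => Va.1 \ {Va.2}
  have hA : ∀ n, U '' A n ∈ OX Z := by
    refine fun n => ⟨forall_mem_image.2 fun Va hVa => ⟨((h𝒰 n).1 _ hVa.1).sdiff isClosed_singleton,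
      hVa.2, ne_univ_iff_exists_notMem _ |>.2 ⟨Va.2, fun h => h.2 rfl⟩⟩,
      eq_univ_of_forall fun z => ?_⟩
    obtain ⟨V, hV, hzV⟩ := mem_sUnion.1 ((h𝒰 n).2 ▸ mem_univ z)
    obtain ⟨a, ha⟩ := exists_ne z
    have hz : z ∈ U (V, a) := ⟨hzV, ha.symm⟩
    exact ⟨U (V, a), mem_image_of_mem U ⟨hV, z, hz⟩, hz⟩
  obtain ⟨ℱ, hℱ, hcap⟩ := h _ hA
  obtain ⟨I, hI, hIcap⟩ :=
    exists_finite_subsets_of_sUnion_image hℱ fun z => eventually_atTop.2 (hcap z)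
  refine ⟨fun n => Prod.fst '' I n, fun n => ⟨image_subset_iff.2 fun Va hVa => ((hI n).1 hVa).1,
    (hI n).2.image _⟩, fun z => (hIcap z).mono ?_⟩
  rintro n ⟨Va, hVa, hz⟩
  exact ⟨Va.1, mem_image_of_mem _ hVa, hz.1⟩

lemma IsHurewicz.of_compactSpace [CompactSpace Z] : IsHurewicz Z := by
  intro 𝒰 h𝒰
  choose ℱ hℱ hℱfin hcov using fun n => isCompact_univ.elim_finite_subcover_image
    (c := id) (h𝒰 n).1 (by simpa [← sUnion_eq_biUnion] using (h𝒰 n).2.symm.subset)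
  refine ⟨ℱ, fun n => ⟨hℱ n, hℱfin n⟩, fun z => Eventually.of_forall fun n => ?_⟩
  simpa [← sUnion_eq_biUnion] using hcov n (mem_univ z)

lemma IsHurewicz.of_iUnion_range_eq_univ {Y : ℕ → Type*} [∀ M, TopologicalSpace (Y M)]
    (f : ∀ M, Y M → Z) (hf : ∀ M, Continuous (f M)) (hY : ∀ M, IsHurewicz (Y M))
    (hcov : ⋃ M, range (f M) = univ) : IsHurewicz Z := by
  intro 𝒰 h𝒰
  choose I hI hcap using fun M => (hY M).exists_finite_subsets (fun U => f M ⁻¹' U) 𝒰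
    (fun n U hU => ((h𝒰 n).1 U hU).preimage (hf M))
    (fun n y => mem_sUnion.1 ((h𝒰 n).2 ▸ mem_univ (f M y)))
  refine ⟨fun n => ⋃ M ∈ Iic n, I M n, fun n => ⟨iUnion₂_subset fun M _ => (hI M n).1,
    (finite_Iic n).biUnion fun M _ => (hI M n).2⟩, fun z => ?_⟩
  obtain ⟨M, y, rfl⟩ := mem_iUnion.1 (hcov ▸ mem_univ z)
  filter_upwards [hcap M y, eventually_ge_atTop M] with n ⟨U, hU, hyU⟩ hMn
  exact ⟨U, mem_biUnion (mem_Iic.2 hMn) hU, hyU⟩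

lemma IsHurewicz.image {Y : Type*} [TopologicalSpace Y] (h : IsHurewicz Y) (f : Y → Z)
    (hf : Continuous f) (hsurj : Surjective f) : IsHurewicz Z :=
  .of_iUnion_range_eq_univ (Y := fun _ => Y) (fun _ => f) (fun _ => hf) (fun _ => h)
    ((iUnion_const _).trans hsurj.range_eq)

end Hurewicz

section PFin

variable {X : Type u}

def PFin.singleton (x : X) : PFin X := ⟨{x}, finite_singleton x, singleton_nonempty x⟩

def PFin.ofRange {ι : Type*} [Finite ι] [Nonempty ι] (p : ι → X) : PFin X :=
  ⟨range p, finite_range p, range_nonempty p⟩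

instance [Nonempty X] : Nonempty (PFin X) := ⟨PFin.singleton (Classical.arbitrary X)⟩

def box (U : Set X) : Set (PFin X) := {K | K.1 ⊆ U}

lemma PFin.singleton_mem_box {x : X} {U : Set X} : PFin.singleton x ∈ box U ↔ x ∈ U :=
  singleton_subset_iff

lemma box_injective : Injective (box (X := X)) := fun U V h => Set.ext fun x => by
  rw [← PFin.singleton_mem_box (U := U), h, PFin.singleton_mem_box]

variable [TopologicalSpace X]

lemma isOpen_box {U : Set X} (hU : IsOpen U) : IsOpen (box U) :=
  GenerateOpen.basic _ ⟨U, hU, Or.inl rfl⟩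

lemma image_box_mem_omegaCovers {𝒰 : Set (Set X)} (h𝒰 : 𝒰 ∈ OmegaCovers X) :
    box '' 𝒰 ∈ OmegaCovers (PFin X) := by
  refine mem_omegaCovers_of (forall_mem_image.2 fun U hU => ?_) fun 𝒦 h𝒦 h𝒦ne => ?_
  · obtain ⟨hUo, ⟨x, hx⟩, hUne⟩ := h𝒰.1.1 U hU
    obtain ⟨y, hy⟩ := (ne_univ_iff_exists_notMem U).1 hUne
    exact ⟨isOpen_box hUo, ⟨_, PFin.singleton_mem_box.2 hx⟩,
      (ne_univ_iff_exists_notMem _).2 ⟨_, mt PFin.singleton_mem_box.1 hy⟩⟩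
  · obtain ⟨K, hK⟩ := h𝒦ne
    obtain ⟨U, hU, hsub⟩ := h𝒰.2 (⋃ K ∈ 𝒦, K.1) (h𝒦.biUnion fun K _ => K.2.1)
      (K.2.2.mono (subset_biUnion_of_mem hK))
    exact ⟨box U, mem_image_of_mem box hU, fun K hK => (subset_biUnion_of_mem hK).trans hsub⟩

lemma mem_omegaCovers_of_image_box {𝒰 : Set (Set X)} (hopen : ∀ U ∈ 𝒰, IsOpen U)
    (h : box '' 𝒰 ∈ OmegaCovers (PFin X)) : 𝒰 ∈ OmegaCovers X := by
  refine mem_omegaCovers_of (fun U hU => ?_) fun F hF hFne => ?_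
  · obtain ⟨-, ⟨K, hK⟩, hne⟩ := h.1.1 (box U) (mem_image_of_mem box hU)
    exact ⟨hopen U hU, K.2.2.mono hK, fun hU => hne (eq_univ_of_forall fun K =>
      hU ▸ subset_univ K.1)⟩
  · obtain ⟨_, ⟨U, hU, rfl⟩, hsub⟩ :=
      h.2 {⟨F, hF, hFne⟩} (finite_singleton _) (singleton_nonempty _)
    exact ⟨U, hU, hsub rfl⟩

lemma sfin_of_sfin_pfin
    (h : Sfin (OmegaCovers (PFin X)) (groupables (OmegaCovers (PFin X)))) :
    Sfin (OmegaCovers X) (groupables (OmegaCovers X)) := by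
  intro 𝒰 h𝒰
  obtain ⟨ℱ, hℱ, hgp⟩ := h (fun n => box '' 𝒰 n) fun n => image_box_mem_omegaCovers (h𝒰 n)
  choose G hG𝒰 hGfin hGℱ using fun n =>
    exists_subset_image_finite_and.1 ⟨ℱ n, (hℱ n).1, (hℱ n).2, rfl⟩
  have hopen : ∀ U ∈ ⋃ n, G n, IsOpen U := fun U hU =>
    let ⟨n, hn⟩ := mem_iUnion.1 hU
    ((h𝒰 n).1.1 U (hG𝒰 n hn)).1
  have hmem : ∀ D ⊆ ⋃ n, G n, box '' D ∈ OmegaCovers (PFin X) → D ∈ OmegaCovers X :=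
    fun D hD => mem_omegaCovers_of_image_box fun U hU => hopen U (hD hU)
  simp only [hGℱ, ← image_iUnion] at hgp
  exact ⟨G, fun n => ⟨hG𝒰 n, hGfin n⟩, hmem _ subset_rfl hgp.1,
    hgp.2.of_image box_injective hmem⟩

lemma PFin.continuous_ofRange {ι : Type*} [Finite ι] [Nonempty ι] :
    Continuous (PFin.ofRange : (ι → X) → PFin X) := by
  rw [continuous_generateFrom_iff]
  rintro S ⟨U, hU, rfl | rfl⟩
  · have : PFin.ofRange ⁻¹' {K : PFin X | K.1 ⊆ U} = univ.pi fun _ : ι => U := by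
      ext p
      simp [PFin.ofRange, range_subset_iff]
    exact this ▸ isOpen_set_pi finite_univ fun _ _ => hU
  · have : PFin.ofRange ⁻¹' {K : PFin X | (K.1 ∩ U).Nonempty} = ⋃ i : ι, (· i) ⁻¹' U := by
      ext p
      simp [PFin.ofRange, Set.Nonempty]
    exact this ▸ isOpen_iUnion fun i => hU.preimage (continuous_apply i)

end PFin

section Powers

variable {X : Type u} [TopologicalSpace X] {ι : Type*} [Finite ι]

lemma exists_isOpen_superset_pi_subset {F : Set X} (hF : F.Finite) {O : Set (ι → X)}
    (hO : IsOpen O) (hFO : univ.pi (fun _ => F) ⊆ O) :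
    ∃ W, IsOpen W ∧ F ⊆ W ∧ univ.pi (fun _ => W) ⊆ O := by
  set P := univ.pi fun _ : ι => F
  choose! v hv hvO using fun p (hp : p ∈ P) => isOpen_pi_iff'.1 hO p (hFO hp)
  -- `x ∈ F` gets the neighbourhood `⋂ {v p i | p ∈ P, p i = x}`
  refine ⟨⋃ x ∈ F, ⋂ p ∈ P, ⋂ i ∈ {i | p i = x}, v p i, ?_, fun x hx => ?_, fun q hq => ?_⟩
  · exact isOpen_biUnion fun x _ => (Finite.pi fun _ => hF).isOpen_biInter fun p hp =>
      (toFinite _).isOpen_biInter fun i _ => (hv p hp i).1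
  · exact mem_biUnion hx (mem_iInter₂.2 fun p hp => mem_iInter₂.2 fun i (hi : p i = x) =>
      hi ▸ (hv p hp i).2)
  · choose g hgF hg using fun i => mem_iUnion₂.1 (mem_univ_pi.1 hq i)
    have hgP : g ∈ P := mem_univ_pi.2 hgF
    exact hvO g hgP (mem_univ_pi.2 fun i =>
      mem_iInter₂.1 (mem_iInter₂.1 (hg i) g hgP) i (show g i = g i from rfl))

lemma setOf_pi_subset_sUnion_mem_omegaCovers [T1Space X] [Infinite X]
    {𝒰 : Set (Set (ι → X))} (hopen : ∀ U ∈ 𝒰, IsOpen U) (hcov : ⋃₀ 𝒰 = univ) :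
    {W : Set X | IsOpen W ∧ W.Nonempty ∧ W ≠ univ ∧
      ∃ 𝒢 ⊆ 𝒰, 𝒢.Finite ∧ univ.pi (fun _ => W) ⊆ ⋃₀ 𝒢} ∈ OmegaCovers X := by
  refine mem_omegaCovers_of (fun W hW => ⟨hW.1, hW.2.1, hW.2.2.1⟩) fun F hF hFne => ?_
  obtain ⟨𝒢, h𝒢, h𝒢fin, hF𝒢⟩ := (Finite.pi fun _ : ι => hF).isCompact.elim_finite_subcover_image
    (c := id) hopen (by simp [← sUnion_eq_biUnion, hcov])
  simp only [id, ← sUnion_eq_biUnion] at hF𝒢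
  obtain ⟨W, hWo, hFW, hWO⟩ :=
    exists_isOpen_superset_pi_subset hF (isOpen_sUnion fun U hU => hopen U (h𝒢 hU)) hF𝒢
  -- `X` is infinite, so `W` can be shrunk to a proper subset still containing `F`
  obtain ⟨x, hx⟩ := hF.exists_notMem
  have hFWx : F ⊆ W \ {x} := fun y hy => ⟨hFW hy, fun hyx => hx (hyx ▸ hy)⟩
  exact ⟨W \ {x}, ⟨hWo.sdiff isClosed_singleton, hFne.mono hFWx,
    (ne_univ_iff_exists_notMem _).2 ⟨x, fun h => h.2 rfl⟩, 𝒢, h𝒢, h𝒢fin,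
    (pi_mono fun _ _ => sdiff_subset).trans hWO⟩, hFWx⟩

end Powers

def OmegaHurewicz (X : Type u) [TopologicalSpace X] : Prop :=
  ∀ 𝒲 : ℕ → Set (Set X), (∀ n, 𝒲 n ∈ OmegaCovers X) →
    ∃ G : ℕ → Set (Set X), (∀ n, G n ⊆ 𝒲 n ∧ (G n).Finite) ∧
      ∀ F : Set X, F.Finite → F.Nonempty → ∀ᶠ n in atTop, ∃ U ∈ G n, F ⊆ U

section OmegaHurewicz

variable {X : Type u}

def accumInter (𝒲 : ℕ → Set (Set X)) : ℕ → Set (Set X)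
  | 0 => 𝒲 0
  | n + 1 => {W | W.Nonempty} ∩ image2 (· ∩ ·) (accumInter 𝒲 n) (𝒲 (n + 1))

lemma exists_superset_of_mem_accumInter {𝒲 : ℕ → Set (Set X)} {W : Set X} {j n : ℕ}
    (hW : W ∈ accumInter 𝒲 n) (hjn : j ≤ n) : ∃ V ∈ 𝒲 j, W ⊆ V := by
  induction n generalizing W with
  | zero => exact ⟨W, Nat.le_zero.1 hjn ▸ hW, subset_rfl⟩
  | succ n ih =>
    obtain ⟨-, U, hU, V, hV, rfl⟩ := hW
    rcases hjn.lt_or_eq with hlt | rfl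
    · obtain ⟨V', hV', hUV'⟩ := ih hU (Nat.lt_succ_iff.1 hlt)
      exact ⟨V', hV', inter_subset_left.trans hUV'⟩
    · exact ⟨V, hV, inter_subset_right⟩

variable [TopologicalSpace X]

lemma inter_mem_omegaCovers {𝒰 𝒱 : Set (Set X)} (h𝒰 : 𝒰 ∈ OmegaCovers X)
    (h𝒱 : 𝒱 ∈ OmegaCovers X) : {W | W.Nonempty} ∩ image2 (· ∩ ·) 𝒰 𝒱 ∈ OmegaCovers X := by
  refine mem_omegaCovers_of ?_ fun F hF hFne => ?_
  · rintro _ ⟨hne, U, hU, V, hV, rfl⟩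
    obtain ⟨hUo, -, hUne⟩ := h𝒰.1.1 U hU
    exact ⟨hUo.inter (h𝒱.1.1 V hV).1, hne,
      fun h => hUne (eq_univ_of_univ_subset (h ▸ inter_subset_left))⟩
  · obtain ⟨U, hU, hFU⟩ := h𝒰.2 F hF hFne
    obtain ⟨V, hV, hFV⟩ := h𝒱.2 F hF hFne
    exact ⟨U ∩ V, ⟨hFne.mono (subset_inter hFU hFV), mem_image2_of_mem hU hV⟩,
      subset_inter hFU hFV⟩

lemma accumInter_mem_omegaCovers {𝒲 : ℕ → Set (Set X)} (h𝒲 : ∀ n, 𝒲 n ∈ OmegaCovers X) :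
    ∀ n, accumInter 𝒲 n ∈ OmegaCovers X
  | 0 => h𝒲 0
  | n + 1 => inter_mem_omegaCovers (accumInter_mem_omegaCovers h𝒲 n) (h𝒲 (n + 1))

lemma omegaHurewicz_of_hurewiczProp_pfin (h : HurewiczProp (PFin X)) : OmegaHurewicz X := by
  intro 𝒲 h𝒲
  obtain ⟨ℱ, hℱ, hcap⟩ := h (fun n => box '' 𝒲 n) fun n => (image_box_mem_omegaCovers (h𝒲 n)).1
  obtain ⟨G, hG, hGcap⟩ :=
    exists_finite_subsets_of_sUnion_image hℱ fun K => eventually_atTop.2 (hcap K)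
  exact ⟨G, hG, fun F hF hFne => hGcap ⟨F, hF, hFne⟩⟩

-- Groups are taken from `accumInter 𝒲`, whose `n`-th term refines `𝒲 j` for all `j ≤ n`.
lemma omegaHurewicz_of_sfin (h : Sfin (OmegaCovers X) (groupables (OmegaCovers X))) :
    OmegaHurewicz X := by
  intro 𝒲 h𝒲
  obtain ⟨𝒜, h𝒜, hgp⟩ := h (accumInter 𝒲) (accumInter_mem_omegaCovers h𝒲)
  obtain ⟨G, hG, hcap⟩ := exists_tail_groups_of_iUnion_mem_groupables (fun n => (h𝒜 n).2) hgp
  have hsup : ∀ j, ∀ U ∈ G j, ∃ V ∈ 𝒲 j, U ⊆ V := fun j U hU =>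
    let ⟨n, hjn, hn⟩ := (hG j).2 U hU
    exists_superset_of_mem_accumInter ((h𝒜 n).1 hn) hjn
  choose! g hg𝒲 hgsub using hsup
  refine ⟨fun j => g j '' G j, fun j => ⟨image_subset_iff.2 fun U hU => hg𝒲 j U hU,
    (hG j).1.image _⟩, fun F hF hFne => (hcap F hF hFne).mono fun j ⟨U, hU, hFU⟩ =>
      ⟨g j U, mem_image_of_mem _ hU, hFU.trans (hgsub j U hU)⟩⟩

lemma isHurewicz_pi_of_omegaHurewicz [T1Space X] [Infinite X] {ι : Type*} [Finite ι]
    (h : OmegaHurewicz X) : IsHurewicz (ι → X) := by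
  intro 𝒰 h𝒰
  obtain ⟨G, hG, hcap⟩ :=
    h _ fun n => setOf_pi_subset_sUnion_mem_omegaCovers (h𝒰 n).1 (h𝒰 n).2
  choose! 𝒢 h𝒢 h𝒢fin hW𝒢 using fun n W (hW : W ∈ G n) => ((hG n).1 hW).2.2.2
  refine ⟨fun n => ⋃ W ∈ G n, 𝒢 n W, fun n => ⟨iUnion₂_subset fun W hW => h𝒢 n W hW,
    (hG n).2.biUnion fun W hW => h𝒢fin n W hW⟩, fun q => ?_⟩
  obtain ⟨x⟩ : Nonempty X := inferInstance
  filter_upwards [hcap (insert x (range q)) ((finite_range q).insert x) (insert_nonempty _ _)]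
    with n ⟨W, hW, hqW⟩
  obtain ⟨U, hU, hqU⟩ := hW𝒢 n W hW
    (mem_univ_pi.2 fun i => hqW (mem_insert_of_mem _ (mem_range_self i)))
  exact ⟨U, mem_biUnion hW hU, hqU⟩

end OmegaHurewicz

section Plays

variable {α : Type*}

def reachable (S : List α → Set α) : ℕ → Set (List α)
  | 0 => {[]}
  | n + 1 => ⋃ l ∈ reachable S n, (fun a => l ++ [a]) '' S l

lemma countable_reachable {S : List α → Set α} (hS : ∀ l, (S l).Countable) :
    ∀ n, (reachable S n).Countable
  | 0 => countable_singleton _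
  | n + 1 => (countable_reachable hS n).biUnion fun l _ => (hS l).image _

def play (τ : List α → α) : ℕ → List α
  | 0 => []
  | n + 1 => play τ n ++ [τ (play τ n)]

lemma play_eq_ofFn (τ : List α → α) : ∀ n, play τ n = List.ofFn fun i : Fin n => τ (play τ i)
  | 0 => rfl
  | n + 1 => by
    simp only [play, List.ofFn_succ', Fin.val_castSucc, Fin.val_last, List.concat_eq_append,
      ← play_eq_ofFn τ n]

lemma length_play (τ : List α → α) (n : ℕ) : (play τ n).length = n := by
  rw [play_eq_ofFn, List.length_ofFn]

lemma mem_play {τ : List α → α} {n : ℕ} {a : α} : a ∈ play τ n ↔ ∃ i < n, τ (play τ i) = a := by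
  rw [play_eq_ofFn, List.mem_ofFn]
  exact ⟨fun ⟨i, hi⟩ => ⟨i, i.2, hi⟩, fun ⟨i, hin, hi⟩ => ⟨⟨i, hin⟩, hi⟩⟩

lemma play_mem_reachable {S : List α → Set α} {τ : List α → α} (hτ : ∀ l, τ l ∈ S l) :
    ∀ n, play τ n ∈ reachable S n
  | 0 => rfl
  | n + 1 => mem_biUnion (play_mem_reachable hτ n) (mem_image_of_mem _ (hτ _))

lemma tendsto_invFun_play {pos : ℕ → List α} {τ : List α → α}
    (h : ∀ n, play τ n ∈ range pos) : Tendsto (fun n => invFun pos (play τ n)) atTop atTop :=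
  Injective.nat_tendsto_atTop fun a b hab => by
    simpa only [length_play] using congrArg List.length
      ((invFun_eq (h a)).symm.trans ((congrArg pos hab).trans (invFun_eq (h b))))

lemma finite_sUnion_play {β : Type*} {τ : List (Set β) → Set β} (hτ : ∀ l, (τ l).Finite)
    (n : ℕ) : (⋃₀ {G | G ∈ play τ n}).Finite :=
  (List.finite_toSet _).sUnion fun G hG => by
    obtain ⟨i, -, rfl⟩ := mem_play.1 hG
    exact hτ _

end Plays

lemma sfin_of_not_oneWinsGfin {α : Type u} {𝒜 ℬ : Set (Set α)} (h : ¬ OneWinsGfin 𝒜 ℬ) :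
    Sfin 𝒜 ℬ := by
  by_contra hfail
  simp only [Sfin, not_forall, not_exists, not_and] at hfail
  obtain ⟨𝒰, h𝒰, hlose⟩ := hfail
  refine h ⟨fun l => 𝒰 l.length, fun l => h𝒰 _, fun F hF => hlose F fun n => ?_⟩
  simpa using (hF n).symm

section Game

variable {X : Type u} [TopologicalSpace X] [Nonempty X]

-- The `k`-th power handles the finite sets with at most `k` points, through the cubes
-- `(⋂₀ 𝒯)^k`.
lemma exists_selection_sInter_of_isHurewicz_pi (h : ∀ k, IsHurewicz (Fin k → X))
    {𝒞 : ℕ → Set (Set X)} (h𝒞 : ∀ m, 𝒞 m ∈ OmegaCovers X) (r : ℕ → ℕ) :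
    ∃ I : ℕ → Set (Set (Set X)), (∀ m, (I m).Finite ∧ ∀ 𝒯 ∈ I m, 𝒯 ⊆ 𝒞 m ∧ r m < 𝒯.ncard) ∧
      ∀ G : Set X, G.Finite → ∀ᶠ m in atTop, ∃ 𝒯 ∈ I m, G ⊆ ⋂₀ 𝒯 := by
  have hpow : ∀ k, ∃ I : ℕ → Set (Set (Set X)),
      (∀ m, I m ⊆ {𝒯 | 𝒯 ⊆ 𝒞 m ∧ r m < 𝒯.ncard} ∧ (I m).Finite) ∧
      ∀ p : Fin k → X, ∀ᶠ m in atTop, ∃ 𝒯 ∈ I m, p ∈ univ.pi fun _ => ⋂₀ 𝒯 := by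
    refine fun k => (h k).exists_finite_subsets _ _ (fun m 𝒯 h𝒯 => isOpen_set_pi finite_univ
      fun _ _ => (finite_of_ncard_pos (pos_of_gt h𝒯.2)).isOpen_sInter fun U hU =>
        ((h𝒞 m).1.1 U (h𝒯.1 hU)).1) fun m p => ?_
    obtain ⟨𝒯, h𝒯, hr, hp⟩ :=
      exists_ncard_lt_subset_sInter_of_mem_omegaCovers (h𝒞 m) (finite_range p) (r m)
    exact ⟨𝒯, ⟨h𝒯, hr⟩, mem_univ_pi.2 fun i => hp (mem_range_self i)⟩
  choose I hI hcap using hpow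
  refine ⟨fun m => ⋃ k ∈ Iic m, I k m, fun m => ⟨(finite_Iic m).biUnion fun k _ => (hI k m).2,
    fun 𝒯 h𝒯 => ?_⟩, fun G hG => ?_⟩
  · obtain ⟨k, -, h𝒯⟩ := mem_iUnion₂.1 h𝒯
    exact (hI k m).1 h𝒯
  · obtain ⟨k, e, he⟩ := hG.fin_embedding
    filter_upwards [hcap k e, eventually_ge_atTop k] with m ⟨𝒯, h𝒯, he𝒯⟩ hkm
    exact ⟨𝒯, mem_biUnion (mem_Iic.2 hkm) h𝒯, he ▸ range_subset_iff.2 (mem_univ_pi.1 he𝒯)⟩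

lemma exists_countable_subset_mem_omegaCovers (h : ∀ k, IsHurewicz (Fin k → X))
    {𝒰 : Set (Set X)} (h𝒰 : 𝒰 ∈ OmegaCovers X) :
    ∃ 𝒱 ⊆ 𝒰, 𝒱.Countable ∧ 𝒱 ∈ OmegaCovers X := by
  obtain ⟨I, hI, hcap⟩ := exists_selection_sInter_of_isHurewicz_pi h (fun _ => h𝒰) fun _ => 0
  have hsub : ⋃ m, ⋃ 𝒯 ∈ I m, 𝒯 ⊆ 𝒰 :=
    iUnion_subset fun m => iUnion₂_subset fun 𝒯 h𝒯 => ((hI m).2 𝒯 h𝒯).1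
  refine ⟨_, hsub, countable_iUnion fun m => ((hI m).1.biUnion fun 𝒯 h𝒯 =>
    finite_of_ncard_pos ((hI m).2 𝒯 h𝒯).2).countable,
    mem_omegaCovers_of (fun U hU => h𝒰.1.1 U (hsub hU)) fun F hF _ => ?_⟩
  obtain ⟨m, 𝒯, h𝒯, hF𝒯⟩ := (hcap F hF).exists
  obtain ⟨U, hU⟩ := nonempty_of_ncard_ne_zero ((hI m).2 𝒯 h𝒯).2.ne'
  exact ⟨U, mem_iUnion.2 ⟨m, mem_biUnion h𝒯 hU⟩, hF𝒯.trans (sInter_subset_of_mem hU)⟩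

theorem not_oneWinsGfin_of_isHurewicz_pi (h : ∀ k, IsHurewicz (Fin k → X)) :
    ¬ OneWinsGfin (OmegaCovers X) (groupables (OmegaCovers X)) := by
  rintro ⟨σ, hσ, hwin⟩
  choose C hCσ hCcount hCΩ using fun l => exists_countable_subset_mem_omegaCovers h (hσ l)
  set S : List (Set (Set X)) → Set (Set (Set X)) := fun l => {G | G.Finite ∧ G ⊆ C l}
  obtain ⟨pos, hpos⟩ := (countable_iUnion (countable_reachable fun l =>
    countable_ofPred_finite_subset (hCcount l))).exists_eq_range ⟨[], mem_iUnion.2 ⟨0, rfl⟩⟩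
  -- at position `l`, Two answers with a family `𝒯` having more members than were played so far
  obtain ⟨I, hI, hcap⟩ := exists_selection_sInter_of_isHurewicz_pi h (fun m => hCΩ (pos m))
    fun m => (⋃₀ {G | G ∈ pos m}).ncard
  set τ : List (Set (Set X)) → Set (Set X) := fun l => C l ∩ ⋃ 𝒯 ∈ I (invFun pos l), 𝒯
  have hτ : ∀ l, τ l ∈ S l := fun l => ⟨((hI _).1.biUnion fun 𝒯 h𝒯 =>
    finite_of_ncard_pos (Nat.zero_lt_of_lt ((hI _).2 𝒯 h𝒯).2)).subset inter_subset_right,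
    inter_subset_left⟩
  set F : ℕ → Set (Set X) := fun n => τ (play τ n)
  have hofFn : ∀ n, List.ofFn (fun i : Fin n => F i) = play τ n := fun n =>
    (play_eq_ofFn τ n).symm
  refine hwin F (fun n => ⟨(hτ _).1, hofFn n ▸ (hτ _).2.trans (hCσ _)⟩)
    (iUnion_mem_groupables_of_fresh F (fun n => (hτ _).1) (fun n U hU => (hCΩ _).1.1 U hU.1)
      fun G hG _ => ?_)
  have hplay : ∀ n, play τ n ∈ range pos := fun n =>
    hpos ▸ mem_iUnion.2 ⟨n, play_mem_reachable hτ n⟩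
  filter_upwards [(tendsto_invFun_play hplay).eventually (hcap G hG)] with n ⟨𝒯, h𝒯, hG𝒯⟩
  obtain ⟨h𝒯C, hr⟩ := (hI _).2 𝒯 h𝒯
  rw [invFun_eq (hplay n)] at h𝒯C hr
  obtain ⟨U, hU𝒯, hUnew⟩ :=
    exists_mem_notMem_of_ncard_lt_ncard hr (finite_sUnion_play (fun l => (hτ l).1) n)
  exact ⟨U, ⟨h𝒯C hU𝒯, mem_biUnion h𝒯 hU𝒯⟩,
    fun i hi hUi => hUnew ⟨F i, mem_play.2 ⟨i, hi, rfl⟩, hUi⟩,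
    hG𝒯.trans (sInter_subset_of_mem hU𝒯)⟩

end Game

lemma exists_fin_range_eq_of_ge {α : Type*} {F : Set α} (hF : F.Finite) (hne : F.Nonempty) :
    ∃ m, ∀ M ≥ m, ∃ p : Fin (M + 1) → α, range p = F := by
  obtain ⟨n, e, rfl⟩ := hF.fin_embedding
  have hn : 0 < n := Fin.pos_iff_nonempty.2 (range_nonempty_iff_nonempty.1 hne)
  refine ⟨n, fun M hM => ⟨fun j => e ⟨min j (n - 1), by omega⟩, ?_⟩⟩
  refine (range_subset_iff.2 fun j => mem_range_self _).antisymm ?_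
  rintro _ ⟨i, rfl⟩
  exact ⟨⟨i, by omega⟩, congrArg e (Fin.ext (min_eq_left (Nat.le_sub_one_of_lt i.2)))⟩

section PFinPowers

variable {X : Type u} [TopologicalSpace X]

lemma isHurewicz_pi_of_isHurewicz_pi_fin (h : ∀ k, IsHurewicz (Fin k → X)) (ι : Type*)
    [Finite ι] : IsHurewicz (ι → X) := by
  obtain ⟨k, ⟨e⟩⟩ := Finite.exists_equiv_fin ι
  let φ := Homeomorph.piCongrLeft (Y := fun _ => X) e.symm
  exact (h k).image φ φ.continuous φ.surjective

lemma isHurewicz_pi_pfin (h : ∀ k, IsHurewicz (Fin k → X)) (ι : Type*) [Finite ι] :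
    IsHurewicz (ι → PFin X) := by
  refine .of_iUnion_range_eq_univ (Y := fun M => ι × Fin (M + 1) → X)
    (fun _ v i => PFin.ofRange fun j => v (i, j))
    (fun _ => continuous_pi fun i =>
      PFin.continuous_ofRange.comp (continuous_pi fun j => continuous_apply (i, j)))
    (fun _ => isHurewicz_pi_of_isHurewicz_pi_fin h _) (eq_univ_of_forall fun K => ?_)
  choose m hm using fun i => exists_fin_range_eq_of_ge (K i).2.1 (K i).2.2
  obtain ⟨M, hM⟩ := Finite.exists_le m
  choose p hp using fun i => hm i M (hM i)
  exact mem_iUnion.2 ⟨M, fun v => p v.1 v.2, funext fun i => Subtype.ext (hp i)⟩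

lemma isHurewicz_pfin (h : ∀ k, IsHurewicz (Fin k → X)) : IsHurewicz (PFin X) :=
  (isHurewicz_pi_pfin h Unit).image (fun v => v ()) (continuous_apply _) fun K => ⟨fun _ => K, rfl⟩

end PFinPowers

theorem statement10 {X : Type u} [TopologicalSpace X] [T2Space X] [Infinite X] :
    List.TFAE
      [HurewiczProp (PFin X),
       Sfin (OmegaCovers (PFin X)) (groupables (OmegaCovers (PFin X))),
       Sfin (OmegaCovers X) (groupables (OmegaCovers X)),
       ∀ n : ℕ, 1 ≤ n → HurewiczProp (Fin n → X),
       ¬ OneWinsGfin (OmegaCovers X) (groupables (OmegaCovers X))] := by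
  have hpow : (∀ n : ℕ, 1 ≤ n → HurewiczProp (Fin n → X)) ↔ ∀ k, IsHurewicz (Fin k → X) := by
    refine ⟨fun h k => ?_, fun h n _ => (h n).hurewiczProp⟩
    cases k with
    | zero => exact .of_compactSpace
    | succ k => exact (h (k + 1) k.succ_pos).isHurewicz
  tfae_have 1 → 4 := fun h1 n _ =>
    (isHurewicz_pi_of_omegaHurewicz (omegaHurewicz_of_hurewiczProp_pfin h1)).hurewiczProp
  tfae_have 3 → 4 := fun h3 n _ =>
    (isHurewicz_pi_of_omegaHurewicz (omegaHurewicz_of_sfin h3)).hurewiczProp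
  tfae_have 4 → 1 := fun h4 => (isHurewicz_pfin (hpow.1 h4)).hurewiczProp
  tfae_have 4 → 2 := fun h4 => sfin_of_not_oneWinsGfin
    (not_oneWinsGfin_of_isHurewicz_pi fun k => isHurewicz_pi_pfin (hpow.1 h4) (Fin k))
  tfae_have 2 → 3 := sfin_of_sfin_pfin
  tfae_have 4 → 5 := fun h4 => not_oneWinsGfin_of_isHurewicz_pi (hpow.1 h4)
  tfae_have 5 → 3 := sfin_of_not_oneWinsGfin
  tfae_finish
end

section
/- Let X be a non-compact Tychonoff space and let ℱ ⊆ C(X) be a set of continuous real-valued functions with 𝟎 ∈ cl(ℱ) ∖ ℱ in C_k(X). Then for every n ∈ ℕ the family 𝕌(ℱ,n) = {U : U a nonempty proper open subset of X such that there exist a nonempty compact K ⊆ X and f ∈ ℱ with K ⊆ U ⊆ f⁻¹((−2⁻ⁿ, 2⁻ⁿ))} is a k-cover of X. -/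
/-!
Given a nonempty compact `K`, some `f ∈ ℱ` lies in the compact-open neighbourhood of `𝟎` of
functions mapping `K` into `(-2⁻ⁿ, 2⁻ⁿ)`. Intersecting `f⁻¹((-2⁻ⁿ, 2⁻ⁿ))` with a proper open
superset of `K`, which exists because `X` is not compact, gives a member of `𝕌(ℱ,n)` containing `K`.
-/

open Set TopologicalSpace

universe u

/-- `closure K` is compact, so it misses some `x₀`; by symmetry of specialization in an R₁ space,
`K` then misses `closure {x₀}`. -/
theorem IsCompact.exists_isOpen_superset_ne_univ {X : Type u} [TopologicalSpace X] [R1Space X]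
    [NoncompactSpace X] {K : Set X} (hK : IsCompact K) :
    ∃ W : Set X, IsOpen W ∧ K ⊆ W ∧ W ≠ univ := by
  obtain ⟨x₀, hx₀⟩ : ∃ x₀, x₀ ∉ closure K :=
    (ne_univ_iff_exists_notMem _).mp hK.closure.ne_univ
  refine ⟨(closure {x₀})ᶜ, isClosed_closure.isOpen_compl, fun y hyK hy => hx₀ ?_,
    fun h => (h.symm ▸ mem_univ x₀ : x₀ ∈ (closure {x₀})ᶜ) (subset_closure rfl)⟩
  exact (specializes_iff_mem_closure.mpr hy).symm.mem_closed isClosed_closure (subset_closure hyK)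

theorem mem_KCovers_of_forall_isCompact {X : Type u} [TopologicalSpace X] {𝒰 : Set (Set X)}
    (h𝒰 : ∀ U ∈ 𝒰, IsOpen U ∧ U.Nonempty ∧ U ≠ univ)
    (hK : ∀ K : Set X, IsCompact K → K.Nonempty → ∃ U ∈ 𝒰, K ⊆ U) : 𝒰 ∈ KCovers X := by
  refine ⟨⟨h𝒰, eq_univ_of_forall fun x => ?_⟩, hK⟩
  obtain ⟨U, hU, hxU⟩ := hK {x} isCompact_singleton (singleton_nonempty x)
  exact ⟨U, hU, hxU rfl⟩

namespace Ck

variable {X : Type u} [TopologicalSpace X]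

theorem isOpen_setOf_mapsTo {K : Set X} {U : Set ℝ} (hK : IsCompact K) (hU : IsOpen U) :
    IsOpen {f : Ck X | MapsTo f.1 K U} :=
  isOpen_generateFrom_of_mem ⟨K, U, hK, hU, rfl⟩

theorem exists_mem_mapsTo_of_mem_closure {ℱ : Set (Ck X)} {f₀ : Ck X} (hf₀ : f₀ ∈ closure ℱ)
    {K : Set X} {U : Set ℝ} (hK : IsCompact K) (hU : IsOpen U) (hKU : MapsTo f₀.1 K U) :
    ∃ f ∈ ℱ, MapsTo f.1 K U := by
  obtain ⟨f, hfKU, hfℱ⟩ := mem_closure_iff.mp hf₀ _ (isOpen_setOf_mapsTo hK hU) hKU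
  exact ⟨f, hfℱ, hfKU⟩

theorem mapsTo_zeroCk_Ioo (K : Set X) {ε : ℝ} (hε : 0 < ε) :
    MapsTo (zeroCk X).1 K (Ioo (-ε) ε) :=
  fun _ _ => ⟨neg_neg_of_pos hε, hε⟩

end Ck

theorem statement14_general {X : Type u} [TopologicalSpace X] [CompletelyRegularSpace X]
    (hX : ¬ CompactSpace X) (ℱ : Set (Ck X))
    (hcl : zeroCk X ∈ closure ℱ) (n : ℕ) :
    {U : Set X | IsOpen U ∧ U.Nonempty ∧ U ≠ Set.univ ∧
      ∃ (K : Set X) (f : Ck X), IsCompact K ∧ K.Nonempty ∧ f ∈ ℱ ∧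
        K ⊆ U ∧ U ⊆ f.1 ⁻¹' Set.Ioo (-(((2:ℝ) ^ n)⁻¹)) (((2:ℝ) ^ n)⁻¹)} ∈ KCovers X := by
  have := not_compactSpace_iff.mp hX
  refine mem_KCovers_of_forall_isCompact (fun U hU => ⟨hU.1, hU.2.1, hU.2.2.1⟩) ?_
  intro K hK hKne
  obtain ⟨W, hWo, hKW, hW⟩ := hK.exists_isOpen_superset_ne_univ
  obtain ⟨f, hfℱ, hfK⟩ := Ck.exists_mem_mapsTo_of_mem_closure hcl hK isOpen_Ioo
    (Ck.mapsTo_zeroCk_Ioo K (by positivity : (0:ℝ) < ((2:ℝ) ^ n)⁻¹))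
  have hKV : K ⊆ W ∩ f.1 ⁻¹' Ioo (-((2:ℝ) ^ n)⁻¹) ((2:ℝ) ^ n)⁻¹ := subset_inter hKW hfK
  refine ⟨_, ⟨hWo.inter (isOpen_Ioo.preimage f.2), hKne.mono hKV,
    ne_top_of_le_ne_top hW inter_subset_left, K, f, hK, hKne, hfℱ, hKV, inter_subset_right⟩, hKV⟩

theorem statement14 {X : Type u} [TopologicalSpace X] [T2Space X] [CompletelyRegularSpace X]
    (hX : ¬ CompactSpace X) (ℱ : Set (Ck X))
    (hcl : zeroCk X ∈ closure ℱ) (hmem : zeroCk X ∉ ℱ) (n : ℕ) :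
    {U : Set X | IsOpen U ∧ U.Nonempty ∧ U ≠ Set.univ ∧
      ∃ (K : Set X) (f : Ck X), IsCompact K ∧ K.Nonempty ∧ f ∈ ℱ ∧
        K ⊆ U ∧ U ⊆ f.1 ⁻¹' Set.Ioo (-(((2:ℝ) ^ n)⁻¹)) (((2:ℝ) ^ n)⁻¹)} ∈ KCovers X :=
  statement14_general hX ℱ hcl n
end
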